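/- arXiv:2601.06810 — 3 statements merged into one kernel-verified Lean document; each statement's English description precedes it below -/
import Mathlib

section
/- Let m : ℝ → ℝ, σ : ℝ → ℝ, and η : ℝ → ℝ^d be differentiable with m(t) > 0 and σ(t) > 0 for every t. Define ρ(t,x) = m(t)·(2π·σ(t)²)^{−d/2}·exp(−‖x − η(t)‖₂²/(2σ(t)²)), u(t,x) = (σ'(t)/σ(t))·(x − η(t)) + η'(t), and g(t) = m'(t)/m(t). Then for every (t,x) ∈ ℝ × ℝ^d: ∂_t ρ(t,x) + div_x(ρ(t,·)·u(t,·))(x) = g(t)·ρ(t,x), where div_x(ρ·u)(t,x) = Σᵢ ∂_{xᵢ}(ρ(t,x)·uᵢ(t,x)). -/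
noncomputable def divg {d : ℕ} (v : EuclideanSpace ℝ (Fin d) → EuclideanSpace ℝ (Fin d))
    (x : EuclideanSpace ℝ (Fin d)) : ℝ :=
  ∑ i, fderiv ℝ (fun y => v y i) x (EuclideanSpace.single i 1)

/-!
Write `ρ = m · N · exp q` with `N = (2πσ²)^(-d/2)` and `q = -‖x - η‖² / (2σ²)`; both sides of the
equation are then `ρ` times a scalar. The time derivative contributes
`m'/m - dσ'/σ + ⟪x - η, η'⟫/σ² + σ'‖x - η‖²/σ³`. By the product rule
`div (ρ u) = ⟪∇ρ, u⟫ + ρ div u`, where `∇ρ = -ρ (x - η)/σ²` and `div u = dσ'/σ`, the flux contributes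
`dσ'/σ - σ'‖x - η‖²/σ³ - ⟪x - η, η'⟫/σ²`. Everything but `m'/m` cancels.
-/

open Real
open scoped RealInnerProductSpace

section Divergence

variable {d : ℕ}

theorem EuclideanSpace.sum_apply_smul_single (v : EuclideanSpace ℝ (Fin d)) :
    ∑ i, v i • EuclideanSpace.single i (1 : ℝ) = v := by
  simpa using (EuclideanSpace.basisFun (Fin d) ℝ).sum_repr v

theorem divg_smul {f : EuclideanSpace ℝ (Fin d) → ℝ}
    {v : EuclideanSpace ℝ (Fin d) → EuclideanSpace ℝ (Fin d)} {x : EuclideanSpace ℝ (Fin d)}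
    (hf : DifferentiableAt ℝ f x) (hv : DifferentiableAt ℝ v x) :
    divg (fun y => f y • v y) x = fderiv ℝ f x (v x) + f x * divg v x := by
  have hvi (i : Fin d) : DifferentiableAt ℝ (fun y => v y i) x :=
    (EuclideanSpace.proj (𝕜 := ℝ) i).differentiableAt.comp x hv
  conv_rhs => rw [← EuclideanSpace.sum_apply_smul_single (v x)]
  simp only [divg, PiLp.smul_apply, smul_eq_mul, fderiv_fun_mul hf (hvi _), map_sum, map_smul,
    add_apply, smul_apply, Finset.sum_add_distrib, Finset.mul_sum]
  ring

theorem divg_affine (a : ℝ) (c b x : EuclideanSpace ℝ (Fin d)) :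
    divg (fun y => a • (y - c) + b) x = d * a := by
  have hcoord (i : Fin d) : HasFDerivAt (fun y : EuclideanSpace ℝ (Fin d) => (a • (y - c) + b) i)
      (a • EuclideanSpace.proj (𝕜 := ℝ) i) x := by
    simp only [PiLp.add_apply, PiLp.smul_apply, PiLp.sub_apply, smul_eq_mul]
    exact (((EuclideanSpace.proj (𝕜 := ℝ) i).hasFDerivAt.sub_const (c i)).const_mul a).add_const (b i)
  simp only [divg, fun i => (hcoord i).fderiv]
  simp

end Divergence

section Gaussian

variable {E : Type*} [NormedAddCommGroup E] [InnerProductSpace ℝ E]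

theorem hasFDerivAt_gaussian (C s : ℝ) (c x : E) :
    HasFDerivAt (fun y => C * exp (-‖y - c‖ ^ 2 / (2 * s ^ 2)))
      ((-(C * exp (-‖x - c‖ ^ 2 / (2 * s ^ 2))) / s ^ 2) • innerSL ℝ (x - c)) x := by
  have hq := ((((hasFDerivAt_id x).sub_const c).norm_sq.fun_neg.mul_const
    (2 * s ^ 2)⁻¹).exp.const_mul C)
  simp only [← div_eq_mul_inv, id] at hq
  refine hq.congr_fderiv ?_
  ext w
  simp only [ContinuousLinearMap.comp_id, smul_neg, neg_apply, smul_apply, coe_innerSL_apply,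
    nsmul_eq_mul, Nat.cast_ofNat, smul_eq_mul]
  ring

theorem HasDerivAt.gaussian_normalizer {σ : ℝ → ℝ} {σ' t : ℝ} (p : ℝ)
    (hσ : HasDerivAt σ σ' t) (hσt : σ t ≠ 0) :
    HasDerivAt (fun r => (2 * π * σ r ^ 2) ^ p)
      (2 * p * σ' / σ t * (2 * π * σ t ^ 2) ^ p) t := by
  have hpos : 2 * π * σ t ^ 2 ≠ 0 := by positivity
  refine (((hσ.fun_pow 2).const_mul (2 * π)).rpow_const (p := p) (Or.inl hpos)).congr_deriv ?_
  rw [Real.rpow_sub_one hpos]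
  field_simp
  push_cast
  ring

theorem HasDerivAt.gaussian_exponent {η : ℝ → E} {σ : ℝ → ℝ} {η' : E} {σ' t : ℝ} (x : E)
    (hη : HasDerivAt η η' t) (hσ : HasDerivAt σ σ' t) (hσt : σ t ≠ 0) :
    HasDerivAt (fun r => -‖x - η r‖ ^ 2 / (2 * σ r ^ 2))
      (⟪x - η t, η'⟫ / σ t ^ 2 + ‖x - η t‖ ^ 2 * σ' / σ t ^ 3) t := by
  refine ((hη.const_sub x).norm_sq.fun_neg.fun_div ((hσ.fun_pow 2).const_mul 2)
    (by positivity)).congr_deriv ?_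
  rw [inner_neg_right]
  field_simp
  push_cast
  ring

end Gaussian

theorem divg_gaussian_smul_affine {d : ℕ} (C s a : ℝ) (c b x : EuclideanSpace ℝ (Fin d)) :
    divg (fun y => (C * exp (-‖y - c‖ ^ 2 / (2 * s ^ 2))) • (a • (y - c) + b)) x
      = C * exp (-‖x - c‖ ^ 2 / (2 * s ^ 2)) * (d * a - (a * ‖x - c‖ ^ 2 + ⟪x - c, b⟫) / s ^ 2) := by
  have hρ := hasFDerivAt_gaussian C s c x
  have hu : DifferentiableAt ℝ (fun y : EuclideanSpace ℝ (Fin d) => a • (y - c) + b) x := by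
    fun_prop
  rw [divg_smul hρ.differentiableAt hu, hρ.fderiv, divg_affine]
  simp only [smul_apply, innerSL_apply_apply, inner_add_right,
    inner_smul_right, real_inner_self_eq_norm_sq, smul_eq_mul]
  ring

/-- **Proposition 4.1, Gaussian path.** The weighted Gaussian path
`ρ(t,x) = m(t)·(2πσ(t)²)^{−d/2}·exp(−‖x−η(t)‖²/(2σ(t)²))` is generated by the vector
field `u(t,x) = (σ'(t)/σ(t))·(x − η(t)) + η'(t)` and growth rate `g(t) = m'(t)/m(t)`:
it satisfies `∂_t ρ + div_x(ρ·u) = g·ρ` pointwise. -/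
theorem gaussian_path_continuity_equation (d : ℕ)
    (m σ : ℝ → ℝ) (η : ℝ → EuclideanSpace ℝ (Fin d))
    (hm : Differentiable ℝ m) (hσ : Differentiable ℝ σ) (hη : Differentiable ℝ η)
    (hm_pos : ∀ t, 0 < m t) (hσ_pos : ∀ t, 0 < σ t)
    (ρ : ℝ → EuclideanSpace ℝ (Fin d) → ℝ)
    (hρ : ∀ t x, ρ t x = m t * (2 * Real.pi * σ t ^ 2) ^ (-(d : ℝ) / 2) *
      Real.exp (-‖x - η t‖ ^ 2 / (2 * σ t ^ 2)))
    (u : ℝ → EuclideanSpace ℝ (Fin d) → EuclideanSpace ℝ (Fin d))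
    (hu : ∀ t x, u t x = (deriv σ t / σ t) • (x - η t) + deriv η t)
    (g : ℝ → ℝ) (hg : ∀ t, g t = deriv m t / m t) :
    ∀ (t : ℝ) (x : EuclideanSpace ℝ (Fin d)),
      deriv (fun s => ρ s x) t + divg (fun y => ρ t y • u t y) x = g t * ρ t x := by
  intro t x
  have hσt := (hσ_pos t).ne'
  have hpath : (fun s => ρ s x) = fun s =>
      m s * (2 * π * σ s ^ 2) ^ (-(d : ℝ) / 2) * exp (-‖x - η s‖ ^ 2 / (2 * σ s ^ 2)) :=
    funext fun s => hρ s x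
  have htime := ((hm t).hasDerivAt.fun_mul
    ((hσ t).hasDerivAt.gaussian_normalizer (-(d : ℝ) / 2) hσt)).fun_mul
    ((hη t).hasDerivAt.gaussian_exponent x (hσ t).hasDerivAt hσt).exp
  have hflux : (fun y => ρ t y • u t y) = fun y =>
      (m t * (2 * π * σ t ^ 2) ^ (-(d : ℝ) / 2) * exp (-‖y - η t‖ ^ 2 / (2 * σ t ^ 2))) •
        ((deriv σ t / σ t) • (y - η t) + deriv η t) := by
    funext y
    rw [hρ, hu]
  rw [hpath, htime.deriv, hflux, divg_gaussian_smul_affine, hg, hρ]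
  field_simp [(hm_pos t).ne']
  ring
end

section
/- Let m > 0, r ≥ 0, and t ∈ [0,1]. Define τ(δ) = tan(r/(2δ)), ω₀(δ) = 2δ·τ(δ)·m/√(1+τ(δ)²), A(δ) = 2m·(1 − 1/√(1+τ(δ)²)), B(δ) = A(δ)/2, and m_δ(t) = A(δ)·t² − 2·B(δ)·t + m. Then, as δ → ∞ (over δ > 0), ω₀(δ)/m_δ(t) → r. -/
open Filter Topology Real

/-- `x * tan (c / x)` is the difference quotient of `u ↦ tan (c * u)` at `0` with step `x⁻¹`. -/
theorem tendsto_mul_tan_div_atTop (c : ℝ) :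
    Tendsto (fun x : ℝ => x * tan (c / x)) atTop (𝓝 c) := by
  have hderiv : HasDerivAt (fun u => tan (c * u)) c 0 := by
    simpa [Function.comp_def] using (hasDerivAt_tan (x := c * 0) (by simp)).comp 0
      ((hasDerivAt_id (0 : ℝ)).const_mul c)
  refine (hderiv.tendsto_slope_zero.comp
    (tendsto_inv_atTop_nhdsGT_zero.mono_right (nhdsGT_le_nhdsNE 0))).congr fun x => ?_
  simp [div_eq_mul_inv]

theorem traveling_dirac_velocity_limit_general (m r t : ℝ) (hm : 0 < m)
    (τ ω₀ A B : ℝ → ℝ) (mδ : ℝ → ℝ → ℝ)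
    (hτ : ∀ δ, τ δ = Real.tan (r / (2 * δ)))
    (hω₀ : ∀ δ, ω₀ δ = 2 * δ * τ δ * m / Real.sqrt (1 + τ δ ^ 2))
    (hA : ∀ δ, A δ = 2 * m * (1 - 1 / Real.sqrt (1 + τ δ ^ 2)))
    (hB : ∀ δ, B δ = A δ / 2)
    (hmδ : ∀ δ t', mδ δ t' = A δ * t' ^ 2 - 2 * B δ * t' + m) :
    Tendsto (fun δ => ω₀ δ / mδ δ t) atTop (nhds r) := by
  have h2δ : Tendsto (fun δ : ℝ => 2 * δ) atTop atTop := tendsto_id.const_mul_atTop two_pos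
  have hδτ : Tendsto (fun δ => 2 * δ * τ δ) atTop (𝓝 r) :=
    ((tendsto_mul_tan_div_atTop r).comp h2δ).congr fun δ => by simp [hτ]
  have hτ0 : Tendsto τ atTop (𝓝 0) := by
    have := (continuousAt_tan.2 (by simp)).tendsto.comp
      ((tendsto_const_nhds (x := r)).div_atTop h2δ)
    rw [tan_zero] at this
    exact this.congr fun δ => (hτ δ).symm
  have hsqrt : Tendsto (fun δ => √(1 + τ δ ^ 2)) atTop (𝓝 1) := by
    simpa using ((hτ0.pow 2).const_add 1).sqrt
  have hA0 : Tendsto A atTop (𝓝 0) := by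
    simpa using ((tendsto_const_nhds (x := (1 : ℝ))).div hsqrt one_ne_zero).const_sub 1
      |>.const_mul (2 * m) |>.congr fun δ => (hA δ).symm
  have hmδ_lim : Tendsto (fun δ => mδ δ t) atTop (𝓝 m) := by
    simpa using ((hA0.mul_const (t ^ 2 - t)).add_const m).congr fun δ => by
      rw [hmδ, hB]; ring
  have hω₀_lim : Tendsto ω₀ atTop (𝓝 (r * m)) := by
    simpa using ((hδτ.mul_const m).div hsqrt one_ne_zero).congr fun δ => (hω₀ δ).symm
  rw [← mul_div_cancel_right₀ r hm.ne']
  exact hω₀_lim.div hmδ_lim hm.ne'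

/-- **velocity limit.** For equal masses `m > 0`, `r ≥ 0` and
`t ∈ [0,1]`, with `τ(δ) = tan(r/(2δ))`, `ω₀(δ) = 2δ·τ(δ)·m/√(1+τ(δ)²)`,
`A(δ) = 2m(1 − 1/√(1+τ(δ)²))`, `B(δ) = A(δ)/2`, `m_δ(t) = A(δ)t² − 2B(δ)t + m`,
the traveling-Dirac speed `ω₀(δ)/m_δ(t)` tends to `r` as `δ → ∞`. -/
theorem traveling_dirac_velocity_limit (m r t : ℝ) (hm : 0 < m) (hr : 0 ≤ r)
    (ht : t ∈ Set.Icc (0 : ℝ) 1)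
    (τ ω₀ A B : ℝ → ℝ) (mδ : ℝ → ℝ → ℝ)
    (hτ : ∀ δ, τ δ = Real.tan (r / (2 * δ)))
    (hω₀ : ∀ δ, ω₀ δ = 2 * δ * τ δ * m / Real.sqrt (1 + τ δ ^ 2))
    (hA : ∀ δ, A δ = 2 * m * (1 - 1 / Real.sqrt (1 + τ δ ^ 2)))
    (hB : ∀ δ, B δ = A δ / 2)
    (hmδ : ∀ δ t', mδ δ t' = A δ * t' ^ 2 - 2 * B δ * t' + m) :
    Tendsto (fun δ => ω₀ δ / mδ δ t) atTop (nhds r) :=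
  traveling_dirac_velocity_limit_general m r t hm τ ω₀ A B mδ hτ hω₀ hA hB hmδ
end

section
/- Fix d ≥ 1, δ > 0, times t₀ < t₁ < … < t_K, and nonnegative boundary densities μ_{t_k} : ℝ^d → [0,∞) for k = 0,…,K. Then WFR²_δ({μ_{t₀},…,μ_{t_K}}) = Σ_{k=1}^{K} ((t_K − t₀)/(t_k − t_{k−1}))·WFR²_δ(μ_{t_{k−1}}, μ_{t_k}; t_{k−1}, t_k), where both sides are elements of [0,∞] and the sum uses extended-real arithmetic. In particular, the multi-time WFR problem is equivalent to the concatenation of the solutions of the successive two-time problems. -/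
open MeasureTheory Set ENNReal

/-- The continuity equation with source, `∂_t ρ + div_x(ρ·u) = g·ρ`, at a point `(t,x)`,
with classical derivatives. -/
def ContEqSource {d : ℕ} (ρ : ℝ → EuclideanSpace ℝ (Fin d) → ℝ)
    (u : ℝ → EuclideanSpace ℝ (Fin d) → EuclideanSpace ℝ (Fin d))
    (g : ℝ → EuclideanSpace ℝ (Fin d) → ℝ) (t : ℝ) (x : EuclideanSpace ℝ (Fin d)) : Prop :=
  deriv (fun s => ρ s x) t + divg (fun y => ρ t y • u t y) x = g t x * ρ t x

/-- The WFR action `I_{a,b}(ρ,u,g) = ∫_a^b ∫ (‖u‖² + δ²·g²)·ρ dx dt ∈ [0,∞]`. -/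
noncomputable def WFRaction (d : ℕ) (δ : ℝ) (a b : ℝ)
    (ρ : ℝ → EuclideanSpace ℝ (Fin d) → ℝ)
    (u : ℝ → EuclideanSpace ℝ (Fin d) → EuclideanSpace ℝ (Fin d))
    (g : ℝ → EuclideanSpace ℝ (Fin d) → ℝ) : ℝ≥0∞ :=
  ∫⁻ t in Icc a b, ∫⁻ x, ENNReal.ofReal ((‖u t x‖ ^ 2 + δ ^ 2 * g t x ^ 2) * ρ t x)

/-- Admissibility of `(ρ,u,g)` for boundary data `(a, b, α, β)`: `ρ` is nonnegative,
continuous in time on `[a,b]` for each `x`, matches the boundary densities, and the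
continuity equation with source holds classically on `(a,b) × ℝ^d`. -/
def WFRAdmissible (d : ℕ) (a b : ℝ) (α β : EuclideanSpace ℝ (Fin d) → ℝ)
    (ρ : ℝ → EuclideanSpace ℝ (Fin d) → ℝ)
    (u : ℝ → EuclideanSpace ℝ (Fin d) → EuclideanSpace ℝ (Fin d))
    (g : ℝ → EuclideanSpace ℝ (Fin d) → ℝ) : Prop :=
  (∀ x, ContinuousOn (fun t => ρ t x) (Icc a b)) ∧
  (∀ x, ∀ t ∈ Icc a b, 0 ≤ ρ t x) ∧
  (∀ x, ρ a x = α x) ∧ (∀ x, ρ b x = β x) ∧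
  (∀ x, ∀ t ∈ Ioo a b, ContEqSource ρ u g t x)

/-- The two-time value `WFR²_δ(α, β; a, b) = ((b−a)/2)·inf` of the action over all
admissible triples. -/
noncomputable def WFR2 (d : ℕ) (δ : ℝ) (α β : EuclideanSpace ℝ (Fin d) → ℝ)
    (a b : ℝ) : ℝ≥0∞ :=
  ENNReal.ofReal ((b - a) / 2) *
    ⨅ (ρ : ℝ → EuclideanSpace ℝ (Fin d) → ℝ)
      (u : ℝ → EuclideanSpace ℝ (Fin d) → EuclideanSpace ℝ (Fin d))
      (g : ℝ → EuclideanSpace ℝ (Fin d) → ℝ)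
      (_ : WFRAdmissible d a b α β ρ u g),
      WFRaction d δ a b ρ u g

/-- The multi-time value `WFR²_δ({μ_{t₀},…,μ_{t_K}}) = ((t_K−t₀)/2)·inf` of the action over
all nonnegative `ρ` continuous in time, matching every snapshot `μ_{t_k}`, satisfying the
continuity equation with source classically on each open interval `(t_{k−1}, t_k)`. -/
noncomputable def WFRmulti (d : ℕ) (δ : ℝ) (K : ℕ) (t : Fin (K + 1) → ℝ)
    (μ : Fin (K + 1) → EuclideanSpace ℝ (Fin d) → ℝ) : ℝ≥0∞ :=
  ENNReal.ofReal ((t (Fin.last K) - t 0) / 2) *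
    ⨅ (ρ : ℝ → EuclideanSpace ℝ (Fin d) → ℝ)
      (u : ℝ → EuclideanSpace ℝ (Fin d) → EuclideanSpace ℝ (Fin d))
      (g : ℝ → EuclideanSpace ℝ (Fin d) → ℝ)
      (_ : (∀ x, ContinuousOn (fun s => ρ s x) (Icc (t 0) (t (Fin.last K)))) ∧
        (∀ x, ∀ s ∈ Icc (t 0) (t (Fin.last K)), 0 ≤ ρ s x) ∧
        (∀ k, ∀ x, ρ (t k) x = μ k x) ∧
        (∀ k : Fin K, ∀ x, ∀ s ∈ Ioo (t k.castSucc) (t k.succ), ContEqSource ρ u g s x)),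
      WFRaction d δ (t 0) (t (Fin.last K)) ρ u g

/-!
A triple is admissible for the multi-time problem iff it is admissible for each two-time problem
on `[t_{k-1}, t_k]`, and the action is additive over these pieces. Conversely, triples admissible
for the separate pieces glue to one admissible triple without changing any piece's action: the
densities agree at the shared times, and velocity and source only matter on the open intervals.
Hence the multi-time infimum is the sum of the two-time infima; the weights
`(t_K - t_0)/(t_k - t_{k-1})` turn each factor `(t_k - t_{k-1})/2` into `(t_K - t_0)/2`.
-/

open Function Topology

section Glue

variable {ι α β : Type*} [Inhabited β]

open Classical in
/-- Meaningful only where the `f i` agree on overlaps of the `S i`; `default` off `⋃ i, S i`. -/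
noncomputable def glue (S : ι → Set α) (f : ι → α → β) (a : α) : β :=
  if h : ∃ i, a ∈ S i then f h.choose a else default

theorem glue_eq_of_mem {S : ι → Set α} {f : ι → α → β}
    (hf : ∀ i j a, a ∈ S i → a ∈ S j → f i a = f j a) {i : ι} {a : α} (ha : a ∈ S i) :
    glue S f a = f i a := by
  have h : ∃ i, a ∈ S i := ⟨i, ha⟩
  rw [glue, dif_pos h]
  exact hf _ _ _ h.choose_spec ha

theorem glue_eq_of_pairwise_disjoint {S : ι → Set α} (hS : Pairwise (Disjoint on S))
    (f : ι → α → β) {i : ι} {a : α} (ha : a ∈ S i) : glue S f a = f i a :=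
  glue_eq_of_mem (fun i j a hi hj => by
    rw [hS.eq (not_disjoint_iff.2 ⟨a, hi, hj⟩)]) ha

end Glue

theorem iInf_sum_eq_sum_iInf_of_glue {ι X : Type*} [Fintype ι] [Nonempty X]
    (P : ι → X → Prop) (A : ι → X → ℝ≥0∞)
    (hglue : ∀ x : ι → X, (∀ i, P i (x i)) → ∃ y, ∀ i, P i y ∧ A i y ≤ A i (x i)) :
    ⨅ (y) (_ : ∀ i, P i y), ∑ i, A i y = ∑ i, ⨅ (x) (_ : P i x), A i x := by
  classical
  refine le_antisymm ?_ (le_iInf₂ fun y hy => Finset.sum_le_sum fun i _ => iInf₂_le y (hy i))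
  set B : ι → X → ℝ≥0∞ := fun i x => ⨅ (_ : P i x), A i x
  have hsum : ∑ i, ⨅ x, B i x = ⨅ x : ι → X, ∑ i, B i (x i) := by
    rw [ENNReal.iInf_sum fun _ x y => ⟨fun i => if B i (x i) ≤ B i (y i) then x i else y i,
      fun i _ => by dsimp only; split_ifs with h; exacts [⟨le_rfl, h⟩, ⟨(not_le.1 h).le, le_rfl⟩]⟩]
    exact Finset.sum_congr rfl fun i _ =>
      ((surjective_eval (β := fun _ : ι => X) i).iInf_comp (B i)).symm
  rw [hsum]
  refine le_iInf fun x => ?_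
  by_cases hx : ∀ i, P i (x i)
  · obtain ⟨y, hy⟩ := hglue x hx
    calc ⨅ (y) (_ : ∀ i, P i y), ∑ i, A i y
        ≤ ∑ i, A i y := iInf₂_le y fun i => (hy i).1
      _ ≤ ∑ i, A i (x i) := Finset.sum_le_sum fun i _ => (hy i).2
      _ = ∑ i, B i (x i) := by simp only [B, iInf_pos (hx _)]
  · obtain ⟨i, hi⟩ := not_forall.1 hx
    rw [ENNReal.sum_eq_top.2 ⟨i, Finset.mem_univ _, by simp only [B, iInf_neg hi]⟩]
    exact le_top

section FinPartition

variable {α : Type*} {K : ℕ} {t : Fin (K + 1) → α}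

theorem Monotone.iUnion_Icc_castSucc_succ [LinearOrder α] (ht : Monotone t) (hK : 1 ≤ K) :
    ⋃ k : Fin K, Icc (t k.castSucc) (t k.succ) = Icc (t 0) (t (Fin.last K)) := by
  refine subset_antisymm
    (iUnion_subset fun k => Icc_subset_Icc (ht (Fin.zero_le _)) (ht (Fin.le_last _)))
    fun s hs => ?_
  obtain ⟨K, rfl⟩ : ∃ K', K = K' + 1 := ⟨K - 1, by omega⟩
  by_contra hcov
  simp only [mem_iUnion, not_exists] at hcov
  -- if no piece contains `s`, induction gives `t j ≤ s` for all `j`, so the last piece does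
  have hle : ∀ j, t j ≤ s := Fin.induction hs.1 fun i hi => (not_le.1 fun h => hcov i ⟨hi, h⟩).le
  exact hcov (Fin.last K) ⟨hle _, by rw [Fin.succ_last]; exact hs.2⟩

theorem Monotone.pairwise_disjoint_Ico_castSucc_succ [Preorder α] (ht : Monotone t) :
    Pairwise (Disjoint on fun k : Fin K => Ico (t k.castSucc) (t k.succ)) :=
  (pairwise_disjoint_on _).2 fun _ _ hkj => disjoint_left.2 fun s hk hj =>
    lt_irrefl s (hk.2.trans_le ((ht (Fin.succ_le_castSucc_iff.2 hkj)).trans hj.1))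

theorem StrictMono.succ_eq_castSucc_of_mem_Icc [PartialOrder α] (ht : StrictMono t)
    {k j : Fin K} (hkj : k < j) {s : α} (hk : s ∈ Icc (t k.castSucc) (t k.succ))
    (hj : s ∈ Icc (t j.castSucc) (t j.succ)) : k.succ = j.castSucc ∧ s = t j.castSucc := by
  have hle : t k.succ ≤ t j.castSucc := ht.monotone (Fin.succ_le_castSucc_iff.2 hkj)
  exact ⟨ht.injective (le_antisymm hle (hj.1.trans hk.2)), le_antisymm (hk.2.trans hle) hj.1⟩

end FinPartition

theorem lintegral_Icc_eq_sum_castSucc_succ {K : ℕ} {t : Fin (K + 1) → ℝ} (ht : Monotone t)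
    (hK : 1 ≤ K) (F : ℝ → ℝ≥0∞) :
    ∫⁻ s in Icc (t 0) (t (Fin.last K)), F s
      = ∑ k : Fin K, ∫⁻ s in Icc (t k.castSucc) (t k.succ), F s := by
  have hdisj :
      Pairwise (AEDisjoint volume on fun k : Fin K => Icc (t k.castSucc) (t k.succ)) :=
    fun _ _ hkj => (ht.pairwise_disjoint_Ico_castSucc_succ hkj).aedisjoint.congr
      Ico_ae_eq_Icc.symm Ico_ae_eq_Icc.symm
  rw [← ht.iUnion_Icc_castSucc_succ hK,
    lintegral_iUnion₀ (fun _ => measurableSet_Icc.nullMeasurableSet) hdisj, tsum_fintype]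

section WFR

variable {d : ℕ}

def WFRMultiAdmissible (d K : ℕ) (t : Fin (K + 1) → ℝ)
    (μ : Fin (K + 1) → EuclideanSpace ℝ (Fin d) → ℝ) (ρ : ℝ → EuclideanSpace ℝ (Fin d) → ℝ)
    (u : ℝ → EuclideanSpace ℝ (Fin d) → EuclideanSpace ℝ (Fin d))
    (g : ℝ → EuclideanSpace ℝ (Fin d) → ℝ) : Prop :=
  (∀ x, ContinuousOn (fun s => ρ s x) (Icc (t 0) (t (Fin.last K)))) ∧
    (∀ x, ∀ s ∈ Icc (t 0) (t (Fin.last K)), 0 ≤ ρ s x) ∧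
    (∀ k, ∀ x, ρ (t k) x = μ k x) ∧
    (∀ k : Fin K, ∀ x, ∀ s ∈ Ioo (t k.castSucc) (t k.succ), ContEqSource ρ u g s x)

theorem wfrMulti_eq_iInf (δ : ℝ) (K : ℕ) (t : Fin (K + 1) → ℝ)
    (μ : Fin (K + 1) → EuclideanSpace ℝ (Fin d) → ℝ) :
    WFRmulti d δ K t μ = ENNReal.ofReal ((t (Fin.last K) - t 0) / 2) *
      ⨅ (ρ) (u) (g) (_ : WFRMultiAdmissible d K t μ ρ u g),
        WFRaction d δ (t 0) (t (Fin.last K)) ρ u g :=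
  rfl

variable {ρ ρ' : ℝ → EuclideanSpace ℝ (Fin d) → ℝ}
  {u u' : ℝ → EuclideanSpace ℝ (Fin d) → EuclideanSpace ℝ (Fin d)}
  {g g' : ℝ → EuclideanSpace ℝ (Fin d) → ℝ}

theorem ContEqSource.congr {s : ℝ} {x : EuclideanSpace ℝ (Fin d)} (h : ContEqSource ρ u g s x)
    (hρ : ρ' =ᶠ[𝓝 s] ρ) (hu : u' s = u s) (hg : g' s = g s) : ContEqSource ρ' u' g' s x := by
  have hderiv : deriv (fun s => ρ' s x) s = deriv (fun s => ρ s x) s :=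
    Filter.EventuallyEq.deriv_eq (hρ.mono fun _ h => congrFun h x)
  rw [ContEqSource, hderiv, hρ.eq_of_nhds, hu, hg]
  exact h

theorem WFRAdmissible.congr {a b : ℝ} (hab : a ≤ b) {α β : EuclideanSpace ℝ (Fin d) → ℝ}
    (h : WFRAdmissible d a b α β ρ u g) (hρ : EqOn ρ' ρ (Icc a b)) (hu : EqOn u' u (Ioo a b))
    (hg : EqOn g' g (Ioo a b)) : WFRAdmissible d a b α β ρ' u' g' := by
  obtain ⟨hcont, hnonneg, hα, hβ, hces⟩ := h
  refine ⟨fun x => (hcont x).congr fun s hs => congrFun (hρ hs) x, fun x s hs => ?_,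
    fun x => ?_, fun x => ?_, fun x s hs => (hces x s hs).congr ?_ (hu hs) (hg hs)⟩
  · rw [hρ hs]; exact hnonneg x s hs
  · rw [hρ (left_mem_Icc.2 hab)]; exact hα x
  · rw [hρ (right_mem_Icc.2 hab)]; exact hβ x
  · filter_upwards [Ioo_mem_nhds hs.1 hs.2] with s' hs' using hρ (Ioo_subset_Icc_self hs')

theorem wfrAction_congr {δ a b : ℝ} (hρ : EqOn ρ' ρ (Ioo a b)) (hu : EqOn u' u (Ioo a b))
    (hg : EqOn g' g (Ioo a b)) : WFRaction d δ a b ρ' u' g' = WFRaction d δ a b ρ u g := by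
  rw [WFRaction, WFRaction, Measure.restrict_congr_set Ioo_ae_eq_Icc.symm]
  refine setLIntegral_congr_fun measurableSet_Ioo fun s hs => ?_
  rw [hρ hs, hu hs, hg hs]

variable {K : ℕ} {t : Fin (K + 1) → ℝ} {μ : Fin (K + 1) → EuclideanSpace ℝ (Fin d) → ℝ}

theorem wfrAction_eq_sum (ht : Monotone t) (hK : 1 ≤ K) (δ : ℝ) :
    WFRaction d δ (t 0) (t (Fin.last K)) ρ u g
      = ∑ k : Fin K, WFRaction d δ (t k.castSucc) (t k.succ) ρ u g :=
  lintegral_Icc_eq_sum_castSucc_succ ht hK _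

theorem wfrMultiAdmissible_iff (ht : Monotone t) (hK : 1 ≤ K) :
    WFRMultiAdmissible d K t μ ρ u g ↔ ∀ k : Fin K,
      WFRAdmissible d (t k.castSucc) (t k.succ) (μ k.castSucc) (μ k.succ) ρ u g := by
  have hcov := ht.iUnion_Icc_castSucc_succ hK
  constructor
  · rintro ⟨hcont, hnonneg, hμ, hces⟩ k
    have hsub := hcov ▸ subset_iUnion (fun k : Fin K => Icc (t k.castSucc) (t k.succ)) k
    exact ⟨fun x => (hcont x).mono hsub, fun x s hs => hnonneg x s (hsub hs),
      hμ k.castSucc, hμ k.succ, hces k⟩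
  · intro h
    refine ⟨fun x => ?_, fun x s hs => ?_, fun j => ?_, fun k => (h k).2.2.2.2⟩
    · rw [← hcov]
      exact (locallyFinite_of_finite _).continuousOn_iUnion (fun _ => isClosed_Icc)
        fun k => (h k).1 x
    · rw [← hcov, mem_iUnion] at hs
      obtain ⟨k, hk⟩ := hs
      exact (h k).2.1 x s hk
    · obtain ⟨K, rfl⟩ : ∃ K', K = K' + 1 := ⟨K - 1, by omega⟩
      induction j using Fin.lastCases with
      | last => simpa only [Fin.succ_last] using (h (Fin.last K)).2.2.2.1
      | cast j => exact (h j).2.2.1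

theorem exists_wfrAdmissible_glue (ht : StrictMono t) (δ : ℝ)
    {ρ : Fin K → ℝ → EuclideanSpace ℝ (Fin d) → ℝ}
    {u : Fin K → ℝ → EuclideanSpace ℝ (Fin d) → EuclideanSpace ℝ (Fin d)}
    {g : Fin K → ℝ → EuclideanSpace ℝ (Fin d) → ℝ}
    (h : ∀ k, WFRAdmissible d (t k.castSucc) (t k.succ) (μ k.castSucc) (μ k.succ)
      (ρ k) (u k) (g k)) :
    ∃ ρ' u' g', ∀ k,
      WFRAdmissible d (t k.castSucc) (t k.succ) (μ k.castSucc) (μ k.succ) ρ' u' g' ∧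
        WFRaction d δ (t k.castSucc) (t k.succ) ρ' u' g'
          = WFRaction d δ (t k.castSucc) (t k.succ) (ρ k) (u k) (g k) := by
  set I : Fin K → Set ℝ := fun k => Icc (t k.castSucc) (t k.succ)
  set J : Fin K → Set ℝ := fun k => Ioo (t k.castSucc) (t k.succ)
  have hJ : Pairwise (Disjoint on J) := ht.monotone.pairwise_disjoint_Ico_castSucc_succ.mono
    fun _ _ h => h.mono Ioo_subset_Ico_self Ioo_subset_Ico_self
  -- closed pieces meet only at a shared endpoint, where both densities equal the snapshot
  have hρ_lt : ∀ k j s, k < j → s ∈ I k → s ∈ I j → ρ k s = ρ j s := by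
    intro k j s hkj hk hj
    obtain ⟨hsucc, rfl⟩ := ht.succ_eq_castSucc_of_mem_Icc hkj hk hj
    funext x
    rw [(h j).2.2.1 x, ← hsucc]
    exact (h k).2.2.2.1 x
  have hρ : ∀ k j s, s ∈ I k → s ∈ I j → ρ k s = ρ j s := by
    intro k j s hk hj
    rcases lt_trichotomy k j with hkj | rfl | hjk
    exacts [hρ_lt k j s hkj hk hj, rfl, (hρ_lt j k s hjk hj hk).symm]
  refine ⟨glue I ρ, glue J u, glue J g, fun k => ?_⟩
  have hρk : EqOn (glue I ρ) (ρ k) (I k) := fun _ hs => glue_eq_of_mem hρ hs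
  have huk : EqOn (glue J u) (u k) (J k) := fun _ hs => glue_eq_of_pairwise_disjoint hJ u hs
  have hgk : EqOn (glue J g) (g k) (J k) := fun _ hs => glue_eq_of_pairwise_disjoint hJ g hs
  exact ⟨(h k).congr (ht k.castSucc_lt_succ).le hρk huk hgk,
    wfrAction_congr (hρk.mono Ioo_subset_Icc_self) huk hgk⟩

theorem iInf_wfrAction_multi_eq_sum (ht : StrictMono t) (hK : 1 ≤ K) (δ : ℝ) :
    ⨅ (ρ) (u) (g) (_ : WFRMultiAdmissible d K t μ ρ u g),
        WFRaction d δ (t 0) (t (Fin.last K)) ρ u g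
      = ∑ k : Fin K, ⨅ (ρ) (u) (g)
          (_ : WFRAdmissible d (t k.castSucc) (t k.succ) (μ k.castSucc) (μ k.succ) ρ u g),
          WFRaction d δ (t k.castSucc) (t k.succ) ρ u g := by
  simp_rw [wfrMultiAdmissible_iff ht.monotone hK, wfrAction_eq_sum ht.monotone hK]
  have := iInf_sum_eq_sum_iInf_of_glue (X := (ℝ → EuclideanSpace ℝ (Fin d) → ℝ) ×
      (ℝ → EuclideanSpace ℝ (Fin d) → EuclideanSpace ℝ (Fin d)) ×
      (ℝ → EuclideanSpace ℝ (Fin d) → ℝ))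
    (fun (k : Fin K) z => WFRAdmissible d (t k.castSucc) (t k.succ) (μ k.castSucc) (μ k.succ)
      z.1 z.2.1 z.2.2)
    (fun (k : Fin K) z => WFRaction d δ (t k.castSucc) (t k.succ) z.1 z.2.1 z.2.2) fun z hz => by
      obtain ⟨ρ, u, g, h⟩ := exists_wfrAdmissible_glue ht δ hz
      exact ⟨(ρ, u, g), fun k => ⟨(h k).1, (h k).2.le⟩⟩
  simpa only [iInf_prod] using this

end WFR

theorem wfr_multimarginal_decomposition_general (d : ℕ) (δ : ℝ)
    (K : ℕ) (hK : 1 ≤ K) (t : Fin (K + 1) → ℝ) (ht : StrictMono t)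
    (μ : Fin (K + 1) → EuclideanSpace ℝ (Fin d) → ℝ) :
    WFRmulti d δ K t μ
      = ∑ k : Fin K,
          ENNReal.ofReal ((t (Fin.last K) - t 0) / (t k.succ - t k.castSucc)) *
            WFR2 d δ (μ k.castSucc) (μ k.succ) (t k.castSucc) (t k.succ) := by
  rw [wfrMulti_eq_iInf, iInf_wfrAction_multi_eq_sum ht hK, Finset.mul_sum]
  refine Finset.sum_congr rfl fun k _ => ?_
  have hΔ : 0 < t k.succ - t k.castSucc := sub_pos.2 (ht k.castSucc_lt_succ)
  have hT : 0 ≤ t (Fin.last K) - t 0 := sub_nonneg.2 (ht.monotone (Fin.zero_le _))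
  rw [WFR2, ← mul_assoc, ← ENNReal.ofReal_mul (div_nonneg hT hΔ.le)]
  congr 2
  field_simp

/-- **Proposition 5.1.** The multi-time WFR value decomposes as the weighted
sum of the successive two-time WFR values:
`WFR²_δ({μ_{t₀},…,μ_{t_K}}) = Σ_{k=1}^{K} ((t_K − t₀)/(t_k − t_{k−1}))·WFR²_δ(μ_{t_{k−1}}, μ_{t_k}; t_{k−1}, t_k)`;
i.e., the multi-time problem is equivalent to the concatenation of the solutions of the
successive two-time problems. -/
theorem wfr_multimarginal_decomposition (d : ℕ) (hd : 1 ≤ d) (δ : ℝ) (hδ : 0 < δ)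
    (K : ℕ) (hK : 1 ≤ K) (t : Fin (K + 1) → ℝ) (ht : StrictMono t)
    (μ : Fin (K + 1) → EuclideanSpace ℝ (Fin d) → ℝ) (hμ : ∀ k x, 0 ≤ μ k x) :
    WFRmulti d δ K t μ
      = ∑ k : Fin K,
          ENNReal.ofReal ((t (Fin.last K) - t 0) / (t k.succ - t k.castSucc)) *
            WFR2 d δ (μ k.castSucc) (μ k.succ) (t k.castSucc) (t k.succ) :=
  wfr_multimarginal_decomposition_general d δ K hK t ht μ
end
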